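/- Let σ be a formula assignment. Then the restriction operation is idempotent: for every Boolean formula C, (C|σ)|σ = C|σ. -/

import Mathlib

/-- Boolean formulas over the basis `{¬, ∨, 0, 1}` with variables indexed by `ℕ`;
disjunction is taken in merged (unbounded fan-in) form. -/
inductive Fml where
  | const : Bool → Fml
  | var : ℕ → Fml
  | neg : Fml → Fml
  | disj : List Fml → Fml

mutual
/-- Boolean-valued structural equality of formulas. -/
def Fml.beq : Fml → Fml → Bool
  | .const a, .const b => a == b
  | .var a, .var b => a == b
  | .neg a, .neg b => Fml.beq a b
  | .disj a, .disj b => Fml.beqList a b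
  | _, _ => false

/-- Structural equality of lists of formulas. -/
def Fml.beqList : List Fml → List Fml → Bool
  | [], [] => true
  | a :: as, b :: bs => Fml.beq a b && Fml.beqList as bs
  | _, _ => false
end

/-- Look up the value assigned to a formula by the assignment `σ`. -/
def lookupF (σ : List (Fml × Bool)) (C : Fml) : Option Bool :=
  (σ.find? (fun p => Fml.beq p.1 C)).map (·.2)

/-- The merged-form children of a formula: the children if it is a disjunction,
else the formula itself. -/
def kids : Fml → List Fml
  | .disj l => l
  | C => [C]

/-- A formula assignment: no formula in the domain is a negation, and every
disjunction in the domain is assigned `1` (true). -/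
def IsFormulaAssignment (σ : List (Fml × Bool)) : Prop :=
  (∀ p ∈ σ, ∀ C : Fml, p.1 ≠ Fml.neg C) ∧
  (∀ p ∈ σ, ∀ l : List Fml, p.1 = Fml.disj l → p.2 = true)

/-- The restriction `C|σ` of a formula by a formula assignment, defined bottom-up:
variables in the domain become their values; negations recurse and propagate
constants; for a disjunction, the restricted children are merged and simplified by
constant propagation, and if the result is a weakening of a disjunction in the
domain of `σ` it becomes `1`. -/
def restrict (σ : List (Fml × Bool)) : Fml → Fml
  | .const b => .const b
  | .var x =>
      match lookupF σ (.var x) with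
      | some b => .const b
      | none => .var x
  | .neg C =>
      match restrict σ C with
      | .const b => .const (!b)
      | C' => .neg C'
  | .disj l =>
      -- restricted, merged children
      let l' := (l.attach.map (fun p => restrict σ p.1)).flatMap kids
      if l'.any (fun C => Fml.beq C (.const true)) then .const true
      else
        let l2 := l'.filter (fun C => ! Fml.beq C (.const false))
        let C' : Fml :=
          match l2 with
          | [] => .const false
          | [D] => D
          | _ => .disj l2
        -- weakening check against disjunctions in the domain of σ
        if σ.any (fun p =>
            match p.1 with
            | .disj ds =>
                !ds.isEmpty && ds.all (fun d => (kids C').any (fun k => Fml.beq d k))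
            | _ => false) then
          .const true
        else C'
termination_by C => sizeOf C
decreasing_by
  all_goals simp_wf
  have := List.sizeOf_lt_of_mem p.2
  omega

theorem Fml.beq_const_iff (C : Fml) (b : Bool) :
    Fml.beq C (Fml.const b) = true ↔ C = Fml.const b := by
  cases C <;> simp [Fml.beq]

/-- A formula is *reduced* w.r.t. `σ`. -/
inductive Reduced (σ : List (Fml × Bool)) : Fml → Prop
  | const (b : Bool) : Reduced σ (.const b)
  | var (x : ℕ) (h : lookupF σ (.var x) = none) : Reduced σ (.var x)
  | neg (C : Fml) (h : Reduced σ C) (hc : ∀ b, C ≠ .const b) : Reduced σ (.neg C)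
  | disj (l : List Fml) (h : ∀ C ∈ l, Reduced σ C)
      (hc : ∀ C ∈ l, ∀ b, C ≠ Fml.const b)
      (hd : ∀ C ∈ l, ∀ l', C ≠ Fml.disj l')
      (hlen : 2 ≤ l.length)
      (hw : σ.any (fun p =>
            match p.1 with
            | .disj ds => !ds.isEmpty && ds.all (fun d => l.any (fun k => Fml.beq d k))
            | _ => false) = false) : Reduced σ (.disj l)

theorem kids_of_not_disj (C : Fml) (h : ∀ l, C ≠ Fml.disj l) : kids C = [C] := by
  cases C <;> simp_all [kids]

theorem flatMap_kids (l : List Fml) (h : ∀ C ∈ l, ∀ l', C ≠ Fml.disj l') :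
    l.flatMap kids = l := by
  induction l with
  | nil => rfl
  | cons a t ih =>
      rw [List.flatMap_cons, kids_of_not_disj a (fun l' => h a (by simp) l'),
        ih (fun C hC => h C (by simp [hC]))]
      rfl

theorem reduced_kids {σ : List (Fml × Bool)} {D : Fml} (h : Reduced σ D) :
    ∀ k ∈ kids D, Reduced σ k ∧ (∀ m, k ≠ Fml.disj m) := by
  cases h with
  | disj l h hc hd hlen hw => exact fun k hk => ⟨h k hk, hd k hk⟩
  | const b => intro k hk; simp [kids] at hk; subst hk; exact ⟨.const b, by simp⟩
  | var x hx => intro k hk; simp [kids] at hk; subst hk; exact ⟨.var x hx, by simp⟩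
  | neg C hC hcC => intro k hk; simp [kids] at hk; subst hk; exact ⟨.neg C hC hcC, by simp⟩

theorem restrict_of_reduced (σ : List (Fml × Bool)) {C : Fml} (h : Reduced σ C) :
    restrict σ C = C := by
  induction h with
  | const b => rw [restrict]
  | var x h => rw [restrict, h]
  | neg C h hc ih =>
      rw [restrict, ih]
      cases C <;> first | rfl | exact absurd rfl (hc _)
  | disj l h hc hd hlen hw ih =>
      have h1 : (l.attach.map fun p => restrict σ p.1) = l := by
        rw [List.attach_map_val (l := l) (f := restrict σ)]
        calc List.map (restrict σ) l = List.map id l := List.map_congr_left ih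
          _ = l := List.map_id l
      have h3 : l.any (fun C => Fml.beq C (.const true)) = false := by
        rw [List.any_eq_false]
        intro x hx hbeq
        exact hc x hx true ((Fml.beq_const_iff x true).mp hbeq)
      have h4 : l.filter (fun C => !Fml.beq C (.const false)) = l := by
        rw [List.filter_eq_self]
        intro a ha
        cases hb : Fml.beq a (Fml.const false) with
        | false => rfl
        | true => exact absurd ((Fml.beq_const_iff a false).mp hb) (hc a ha false)
      match l, hlen, h1, h3, h4, hw with
      | a :: b :: t, hlen, h1, h3, h4, hw =>
        rw [restrict]
        simp only [h1, flatMap_kids _ hd, h3, Bool.false_eq_true, if_false, h4]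
        show (if (σ.any fun p =>
            match p.1 with
            | Fml.disj ds => !ds.isEmpty &&
                ds.all fun d => (a :: b :: t).any fun k => Fml.beq d k
            | _ => false) = true then Fml.const true else Fml.disj (a :: b :: t))
          = Fml.disj (a :: b :: t)
        rw [hw]
        simp

theorem reduced_restrict_aux (σ : List (Fml × Bool)) :
    ∀ n (C : Fml), sizeOf C ≤ n → Reduced σ (restrict σ C) := by
  intro n
  induction n with
  | zero => intro C hC; cases C <;> simp at hC
  | succ n IH =>
    intro C hC
    cases C with
    | const b => rw [restrict]; exact .const b
    | var x =>
        rw [restrict]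
        cases h : lookupF σ (.var x) with
        | some b => exact .const b
        | none => exact .var x h
    | neg D =>
        have hD : Reduced σ (restrict σ D) := IH D (by simp at hC; omega)
        rw [restrict]
        cases h : restrict σ D with
        | const b => exact .const _
        | var x => exact .neg _ (h ▸ hD) (by simp)
        | neg E => exact .neg _ (h ▸ hD) (by simp)
        | disj m => exact .neg _ (h ▸ hD) (by simp)
    | disj l =>
        have hIH : ∀ D ∈ l, Reduced σ (restrict σ D) := by
          intro D hD
          have := List.sizeOf_lt_of_mem hD
          exact IH D (by simp at hC; omega)
        simp only [restrict]
        split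
        · exact .const true
        · next hany =>
          split_ifs
          · exact .const true
          · next hweak =>
            simp only [Bool.not_eq_true] at hany hweak
            have hmem : ∀ k ∈ List.filter (fun C => !Fml.beq C (Fml.const false))
                ((List.map (fun (p : {x // x ∈ l}) => restrict σ p.1) l.attach).flatMap kids),
                Reduced σ k ∧ (∀ m, k ≠ Fml.disj m) ∧ ∀ b, k ≠ Fml.const b := by
              intro k hk
              rw [List.mem_filter] at hk
              obtain ⟨hk', hf⟩ := hk
              have hk'' := hk'
              rw [List.mem_flatMap] at hk'
              obtain ⟨D, hD, hkD⟩ := hk'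
              rw [List.mem_map] at hD
              obtain ⟨p, hp, rfl⟩ := hD
              obtain ⟨hr, hnd⟩ := reduced_kids (hIH p.1 p.2) k hkD
              refine ⟨hr, hnd, fun b hb => ?_⟩
              cases b with
              | false => subst hb; simp [Fml.beq] at hf
              | true =>
                  subst hb
                  rw [List.any_eq_false] at hany
                  exact hany _ hk'' (by simp [Fml.beq])
            cases hE : List.filter (fun C => !Fml.beq C (Fml.const false))
                ((List.map (fun (p : {x // x ∈ l}) => restrict σ p.1) l.attach).flatMap kids) with
            | nil => exact .const false
            | cons D t2 =>
              cases t2 with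
              | nil =>
                  show Reduced σ D
                  exact (hmem D (by rw [hE]; simp)).1
              | cons E t3 =>
                  show Reduced σ (Fml.disj (D :: E :: t3))
                  rw [hE] at hweak
                  refine .disj _ (fun C hC => (hmem C (hE ▸ hC)).1)
                    (fun C hC b => (hmem C (hE ▸ hC)).2.2 b)
                    (fun C hC m => (hmem C (hE ▸ hC)).2.1 m)
                    (by simp) ?_
                  exact hweak

theorem reduced_restrict (σ : List (Fml × Bool)) (C : Fml) : Reduced σ (restrict σ C) :=
  reduced_restrict_aux σ (sizeOf C) C le_rfl

theorem restrict_idempotent' (σ : List (Fml × Bool))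
    (C : Fml) : restrict σ (restrict σ C) = restrict σ C :=
  restrict_of_reduced σ (reduced_restrict σ C)

/-- Restriction by a formula assignment is idempotent:
`(C|σ)|σ = C|σ` for every Boolean formula `C`. -/
theorem restrict_idempotent (σ : List (Fml × Bool)) (hσ : IsFormulaAssignment σ)
    (C : Fml) : restrict σ (restrict σ C) = restrict σ C := by
  exact restrict_of_reduced σ (reduced_restrict σ C)
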